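/- arXiv:1811.00417 — 2 statements merged into one kernel-verified Lean document; each statement's English description precedes it below -/
import Mathlib

section
/- The function $f(r) = \frac{r}{r_0\sqrt{\pi D t}} \exp\left(-\frac{r^2+r_0^2}{4Dt}\right)\sinh\left(\frac{r_0 r}{2Dt}\right)$ defined for $r \geq 0$ (with $D, t, r_0 > 0$) is a valid probability density: it is nonnegative and integrates to 1 over $[0,\infty)$. -/
/-!
Writing `exp(-(r² + r0²)/(4Dt)) sinh(r0 r/(2Dt))` as half the difference of the Gaussians
`exp(-(r ∓ r0)²/(4Dt))`, the density becomes a difference of two first moments of shifted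
Gaussians, `∫ x exp(-b (x - c)²) dx = c √(π/b)`. Over the whole line this gives `2`, and since the
density is even, its integral over `(0, ∞)` is `1`.
-/

open MeasureTheory Real Set

lemma integral_mul_exp_neg_mul_sq (b : ℝ) : ∫ x : ℝ, x * exp (-b * x ^ 2) = 0 := by
  have h := integral_neg_eq_self (fun x : ℝ => x * exp (-b * x ^ 2)) volume
  simp only [neg_sq, neg_mul, integral_neg] at h ⊢
  linarith

lemma integrable_mul_exp_neg_mul_sub_sq {b : ℝ} (hb : 0 < b) (c : ℝ) :
    Integrable (fun x : ℝ => x * exp (-b * (x - c) ^ 2)) := by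
  have h := ((integrable_mul_exp_neg_mul_sq hb).add
    ((integrable_exp_neg_mul_sq hb).const_mul c)).comp_sub_right c
  refine h.congr (.of_forall fun x => ?_)
  simp only [Pi.add_apply]
  ring

lemma integral_mul_exp_neg_mul_sub_sq {b : ℝ} (hb : 0 < b) (c : ℝ) :
    ∫ x : ℝ, x * exp (-b * (x - c) ^ 2) = c * √(π / b) := by
  rw [← integral_add_right_eq_self _ c]
  simp only [add_sub_cancel_right, add_mul]
  rw [integral_add (integrable_mul_exp_neg_mul_sq hb) ((integrable_exp_neg_mul_sq hb).const_mul c),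
    integral_mul_exp_neg_mul_sq, integral_const_mul, integral_gaussian, zero_add]

lemma exp_mul_sinh (a b : ℝ) : exp a * sinh b = (exp (a + b) - exp (a - b)) / 2 := by
  rw [sinh_eq, exp_add, exp_sub, exp_neg, div_eq_mul_inv]
  ring

noncomputable def radialDensity (D t r0 r : ℝ) : ℝ :=
  r / (r0 * √(π * D * t)) * exp (-(r ^ 2 + r0 ^ 2) / (4 * D * t)) * sinh (r0 * r / (2 * D * t))

lemma radialDensity_nonneg {D t r0 r : ℝ} (hD : 0 ≤ D) (ht : 0 ≤ t) (hr0 : 0 ≤ r0)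
    (hr : 0 ≤ r) : 0 ≤ radialDensity D t r0 r := by
  have hsinh : 0 ≤ sinh (r0 * r / (2 * D * t)) := sinh_nonneg_iff.mpr (by positivity)
  unfold radialDensity
  positivity

lemma radialDensity_neg (D t r0 r : ℝ) : radialDensity D t r0 (-r) = radialDensity D t r0 r := by
  simp only [radialDensity, neg_sq, mul_neg, neg_div, sinh_neg, neg_mul, neg_neg]

lemma radialDensity_eq_sub {D t : ℝ} (hD : D ≠ 0) (ht : t ≠ 0) (r0 r : ℝ) :
    radialDensity D t r0 r = (2 * (r0 * √(π * D * t)))⁻¹ *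
      (r * exp (-(4 * D * t)⁻¹ * (r - r0) ^ 2) - r * exp (-(4 * D * t)⁻¹ * (r - -r0) ^ 2)) := by
  have h₁ : -(r ^ 2 + r0 ^ 2) / (4 * D * t) + r0 * r / (2 * D * t)
      = -(4 * D * t)⁻¹ * (r - r0) ^ 2 := by
    field_simp; ring
  have h₂ : -(r ^ 2 + r0 ^ 2) / (4 * D * t) - r0 * r / (2 * D * t)
      = -(4 * D * t)⁻¹ * (r - -r0) ^ 2 := by
    field_simp; ring
  rw [radialDensity, mul_assoc, exp_mul_sinh, h₁, h₂]
  ring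

lemma integral_radialDensity {D t r0 : ℝ} (hD : 0 < D) (ht : 0 < t) (hr0 : r0 ≠ 0) :
    ∫ r, radialDensity D t r0 r = 2 := by
  have hb : 0 < (4 * D * t)⁻¹ := by positivity
  have hsqrt : √(π / (4 * D * t)⁻¹) = 2 * √(π * D * t) := by
    rw [div_inv_eq_mul, show π * (4 * D * t) = 2 ^ 2 * (π * D * t) by ring,
      sqrt_mul (by norm_num), sqrt_sq zero_le_two]
  have hS : 0 < √(π * D * t) := by positivity
  simp_rw [radialDensity_eq_sub hD.ne' ht.ne']
  rw [integral_const_mul, integral_sub (integrable_mul_exp_neg_mul_sub_sq hb r0)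
    (integrable_mul_exp_neg_mul_sub_sq hb (-r0)), integral_mul_exp_neg_mul_sub_sq hb,
    integral_mul_exp_neg_mul_sub_sq hb, hsqrt]
  field_simp
  ring

/-- The function `f(r) = r/(r0 √(π D t)) exp(-(r²+r0²)/(4Dt)) sinh(r0 r/(2Dt))`
(for `D, t, r0 > 0`) is a valid probability density on `[0, ∞)`: it is
nonnegative there and integrates to 1. -/
theorem stmt_2 (D t r0 : ℝ) (hD : 0 < D) (ht : 0 < t) (hr0 : 0 < r0) :
    (∀ r : ℝ, 0 ≤ r →
      0 ≤ r / (r0 * Real.sqrt (π * D * t)) * Real.exp (-(r ^ 2 + r0 ^ 2) / (4 * D * t)) *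
          Real.sinh (r0 * r / (2 * D * t))) ∧
    ∫ r in Ioi (0 : ℝ),
        r / (r0 * Real.sqrt (π * D * t)) * Real.exp (-(r ^ 2 + r0 ^ 2) / (4 * D * t)) *
          Real.sinh (r0 * r / (2 * D * t)) = 1 := by
  refine ⟨fun r hr => radialDensity_nonneg hD.le ht.le hr0.le hr, ?_⟩
  have heven : ∀ x, radialDensity D t r0 |x| = radialDensity D t r0 x := fun x => by
    rcases abs_choice x with hx | hx <;> simp only [hx, radialDensity_neg]
  have hfold := integral_comp_abs (f := radialDensity D t r0)
  simp only [heven, integral_radialDensity hD ht hr0.ne'] at hfold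
  change ∫ r in Ioi (0 : ℝ), radialDensity D t r0 r = 1
  linarith
end

section
/- For fixed $\tau > 0$, $a_{rx} > 0$, $D_X > 0$, the function $h(r) = \frac{a_{rx}}{\sqrt{4\pi D_X \tau^3}}\left(1 - \frac{a_{rx}}{r}\right)\exp\left(-\frac{(r-a_{rx})^2}{4 D_X \tau}\right)$ on $(a_{rx}, \infty)$ has exactly one critical point $r^\star$: $h$ is strictly increasing on $(a_{rx}, r^\star)$ and strictly decreasing on $(r^\star, \infty)$, and $h$ attains its maximum on $(a_{rx},\infty)$ at $r^\star$. -/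
open Real Set

set_option maxHeartbeats 1000000 in
/-- For fixed `τ, arx, DX > 0`, the CIR
`h(r) = arx/√(4π DX τ³) (1 - arx/r) exp(-(r-arx)²/(4 DX τ))` on `(arx, ∞)` has
exactly one critical point `r⋆`: `h` is strictly increasing on `(arx, r⋆]`,
strictly decreasing on `[r⋆, ∞)`, attains its maximum over `(arx, ∞)` at `r⋆`,
and `r⋆` is the unique zero of `h'` in `(arx, ∞)`. -/
theorem stmt_5 (τ arx DX : ℝ) (hτ : 0 < τ) (harx : 0 < arx) (hDX : 0 < DX) :
    ∃ rstar : ℝ, arx < rstar ∧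
      StrictMonoOn (fun r : ℝ =>
          arx / Real.sqrt (4 * π * DX * τ ^ 3) * (1 - arx / r) *
            Real.exp (-(r - arx) ^ 2 / (4 * DX * τ))) (Ioc arx rstar) ∧
      StrictAntiOn (fun r : ℝ =>
          arx / Real.sqrt (4 * π * DX * τ ^ 3) * (1 - arx / r) *
            Real.exp (-(r - arx) ^ 2 / (4 * DX * τ))) (Ici rstar) ∧
      (∀ r : ℝ, arx < r →
        arx / Real.sqrt (4 * π * DX * τ ^ 3) * (1 - arx / r) *
            Real.exp (-(r - arx) ^ 2 / (4 * DX * τ)) ≤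
          arx / Real.sqrt (4 * π * DX * τ ^ 3) * (1 - arx / rstar) *
            Real.exp (-(rstar - arx) ^ 2 / (4 * DX * τ))) ∧
      (∀ r : ℝ, arx < r →
        (deriv (fun s : ℝ =>
            arx / Real.sqrt (4 * π * DX * τ ^ 3) * (1 - arx / s) *
              Real.exp (-(s - arx) ^ 2 / (4 * DX * τ))) r = 0 ↔ r = rstar)) := by
  set C := arx / Real.sqrt (4 * π * DX * τ ^ 3) with hCdef
  have hC : 0 < C := div_pos harx (Real.sqrt_pos.mpr (by positivity))
  set h : ℝ → ℝ := fun r : ℝ =>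
      C * (1 - arx / r) * Real.exp (-(r - arx) ^ 2 / (4 * DX * τ)) with hh
  set ψ : ℝ → ℝ := fun r : ℝ => 2 * DX * τ * arx - r * (r - arx) ^ 2 with hψ
  -- derivative formula
  have hderiv : ∀ r : ℝ, 0 < r → HasDerivAt h
      (C * Real.exp (-(r - arx) ^ 2 / (4 * DX * τ)) / (2 * DX * τ * r ^ 2) * ψ r) r := by
    intro r hr
    have hinv : HasDerivAt (fun s : ℝ => arx / s) (arx * (-(r ^ 2)⁻¹)) r := by
      simpa [div_eq_mul_inv] using (hasDerivAt_inv hr.ne').const_mul arx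
    have h1 : HasDerivAt (fun s : ℝ => C * (1 - arx / s)) (C * (0 - arx * (-(r ^ 2)⁻¹))) r :=
      (((hasDerivAt_const r (1 : ℝ)).sub hinv)).const_mul C
    have hq : HasDerivAt (fun s : ℝ => -(s - arx) ^ 2 / (4 * DX * τ))
        (-(2 * (r - arx)) / (4 * DX * τ)) r := by
      have h2 : HasDerivAt (fun s : ℝ => (s - arx) ^ 2) (2 * (r - arx)) r := by
        simpa using ((hasDerivAt_id r).sub_const arx).fun_pow 2
      simpa using h2.neg.div_const (4 * DX * τ)
    have hexp := hq.exp
    have := h1.fun_mul hexp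
    refine this.congr_deriv ?_
    have hr0 : r ≠ 0 := hr.ne'
    have hD0 : DX ≠ 0 := hDX.ne'
    have hτ0 : τ ≠ 0 := hτ.ne'
    simp only [hψ]
    field_simp
    ring
  -- ψ strictly decreasing on Ici arx
  have hψanti : StrictAntiOn ψ (Ici arx) := by
    intro x hx y hy hxy
    simp only [hψ]
    have hx' : arx ≤ x := hx
    have key : x * (x - arx) ^ 2 < y * (y - arx) ^ 2 := by
      rcases eq_or_lt_of_le hx' with he | hlt
      · have hy' : arx < y := he ▸ hxy
        rw [← he]; simp only [sub_self]
        nlinarith [mul_pos (harx.trans hy') (pow_pos (sub_pos.2 hy') 2)]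
      · have h2 : (x - arx) ^ 2 < (y - arx) ^ 2 := by nlinarith
        exact mul_lt_mul'' hxy h2 (harx.trans hlt).le (sq_nonneg _)
    linarith
  -- find the root
  obtain ⟨rstar, hrmem, hψ0⟩ : ∃ rstar ∈ Ioo arx (arx + 1 + 2 * DX * τ), ψ rstar = 0 := by
    have hcont : ContinuousOn ψ (Icc arx (arx + 1 + 2 * DX * τ)) := by
      apply Continuous.continuousOn; simp only [hψ]
      exact continuous_const.sub (continuous_id.mul ((continuous_id.sub continuous_const).pow 2))
    have hle : arx ≤ arx + 1 + 2 * DX * τ := by nlinarith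
    have h0mem : (0 : ℝ) ∈ Ioo (ψ (arx + 1 + 2 * DX * τ)) (ψ arx) := by
      constructor
      · simp only [hψ]; nlinarith [mul_pos hDX hτ, sq_nonneg (2 * DX * τ)]
      · simp only [hψ]; nlinarith [mul_pos hDX hτ]
    have := intermediate_value_Ioo' hle hcont h0mem
    obtain ⟨rstar, hmem, heq⟩ := this
    exact ⟨rstar, hmem, heq⟩
  have harx_lt : arx < rstar := hrmem.1
  have hrpos : 0 < rstar := harx.trans harx_lt
  -- sign of ψ
  have hψpos : ∀ r : ℝ, arx < r → r < rstar → 0 < ψ r := fun r h1 h2 => by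
    have := hψanti (le_of_lt h1) (le_of_lt harx_lt) h2
    linarith [hψ0 ▸ this]
  have hψneg : ∀ r : ℝ, rstar < r → ψ r < 0 := fun r h2 => by
    have := hψanti (le_of_lt harx_lt) (le_of_lt (harx_lt.trans h2)) h2
    linarith [hψ0 ▸ this]
  have hposfac : ∀ r : ℝ, 0 < r →
      0 < C * Real.exp (-(r - arx) ^ 2 / (4 * DX * τ)) / (2 * DX * τ * r ^ 2) := by
    intro r hr; positivity
  refine ⟨rstar, harx_lt, ?_, ?_, ?_, ?_⟩
  · -- StrictMonoOn on Ioc arx rstar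
    apply strictMonoOn_of_deriv_pos (convex_Ioc arx rstar)
    · intro x hx
      exact (hderiv x (harx.trans hx.1)).continuousAt.continuousWithinAt
    · intro x hx
      rw [interior_Ioc] at hx
      rw [(hderiv x (harx.trans hx.1)).deriv]
      exact mul_pos (hposfac x (harx.trans hx.1)) (hψpos x hx.1 hx.2)
  · -- StrictAntiOn on Ici rstar
    apply strictAntiOn_of_deriv_neg (convex_Ici rstar)
    · intro x hx
      exact (hderiv x (hrpos.trans_le hx)).continuousAt.continuousWithinAt
    · intro x hx
      rw [interior_Ici] at hx
      rw [(hderiv x (hrpos.trans hx)).deriv]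
      exact mul_neg_of_pos_of_neg (hposfac x (hrpos.trans hx)) (hψneg x hx)
  · -- max
    intro r hr
    have hmono : StrictMonoOn h (Ioc arx rstar) := by
      apply strictMonoOn_of_deriv_pos (convex_Ioc arx rstar)
      · intro x hx
        exact (hderiv x (harx.trans hx.1)).continuousAt.continuousWithinAt
      · intro x hx
        rw [interior_Ioc] at hx
        rw [(hderiv x (harx.trans hx.1)).deriv]
        exact mul_pos (hposfac x (harx.trans hx.1)) (hψpos x hx.1 hx.2)
    have hanti : StrictAntiOn h (Ici rstar) := by
      apply strictAntiOn_of_deriv_neg (convex_Ici rstar)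
      · intro x hx
        exact (hderiv x (hrpos.trans_le hx)).continuousAt.continuousWithinAt
      · intro x hx
        rw [interior_Ici] at hx
        rw [(hderiv x (hrpos.trans hx)).deriv]
        exact mul_neg_of_pos_of_neg (hposfac x (hrpos.trans hx)) (hψneg x hx)
    rcases lt_trichotomy r rstar with hlt | heq | hgt
    · exact (hmono ⟨hr, hlt.le⟩ ⟨harx_lt, le_refl _⟩ hlt).le
    · rw [heq]
    · exact (hanti (self_mem_Ici) hgt.le hgt).le
  · -- deriv zero iff
    intro r hr
    have hr0 : 0 < r := harx.trans hr
    rw [(hderiv r hr0).deriv]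
    constructor
    · intro hz
      rcases mul_eq_zero.mp hz with h1 | h2
      · exact absurd h1 (hposfac r hr0).ne'
      · exact hψanti.injOn hr.le harx_lt.le (h2.trans hψ0.symm)
    · intro h; rw [h, hψ0, mul_zero]
end
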